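/- Tightness ordering of weak formulations: in the setting of the discretized weak OCP, suppose local measures (ν_{t_{n_T},k})_k, (ξ_{i,k})_{i,k}, (π_{i,j,k})_{i,j,k} with π_{i,j,k} = −π_{i,k,j} satisfy, for every globally C¹'² test function w on [0,T] × X, the local Dynkin constraints ∫ w(t_i,·)dν_{t_i,k} − ∫ w(t_{i-1},·)dν_{t_{i-1},k} = ∫ A w dξ_{i,k} + Σ_{j≠k} ∫ w dπ_{i,j,k} for all i, k (with ν_{t_0,k} the restriction of ν₀ to X_k). Define ξ = Σ_{i,k} ξ_{i,k} and ν_T = Σ_k ν_{t_{n_T},k}. Then (ν_T, ξ) satisfies the global Dynkin constraint ∫ w(T,·)dν_T − ∫ w(0,·)dν₀ = ∫ A w dξ for every such test function w, and the objective values agree: Σ_{i,k} ∫ ℓ dξ_{i,k} + Σ_k ∫ φ dν_{t_{n_T},k} = ∫ ℓ dξ + ∫ φ dν_T. -/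
import Mathlib


open MeasureTheory

/-- The integral of a real function against a finite signed measure, via the Jordan
decomposition. -/
noncomputable def sintegral {α : Type*} [MeasurableSpace α]
    (π : SignedMeasure α) (f : α → ℝ) : ℝ :=
  (∫ x, f x ∂π.toJordanDecomposition.posPart) - ∫ x, f x ∂π.toJordanDecomposition.negPart


lemma sintegral_neg {α : Type*} [MeasurableSpace α]
    (π : SignedMeasure α) (f : α → ℝ) : sintegral (-π) f = - sintegral π f := by
  unfold sintegral
  rw [SignedMeasure.toJordanDecomposition_neg, JordanDecomposition.neg_posPart,
    JordanDecomposition.neg_negPart]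
  ring

/-- Tightness ordering of weak formulations: local occupation measures satisfying the local
Dynkin constraints for every admissible test function induce, by summation, global occupation
measures `ξ = Σ_{i,k} ξ_{i,k}` and `ν_T = Σ_k ν_{t_{n_T},k}` that satisfy the global Dynkin
constraint, and the objective values agree. Hence the discretized weak OCP is at least as
tight a relaxation as the original weak OCP. -/
theorem discretized_feasible_implies_global_feasible
    {Xs Us : Type*} [MeasurableSpace Xs] [MeasurableSpace Us]
    (nT nX : ℕ) (hnT : 0 < nT) (T : ℝ)
    (τ : Fin (nT + 1) → ℝ) (hτmono : Monotone τ) (hτ0 : τ 0 = 0) (hτT : τ (Fin.last nT) = T)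
    (Xp : Fin nX → Set Xs) (hXmeas : ∀ k, MeasurableSet (Xp k))
    (hdisj : Pairwise (Function.onFun Disjoint Xp)) (hcover : ⋃ k, Xp k = Set.univ)
    (ℓ : Xs → Us → ℝ) (φ : Xs → ℝ)
    -- the class of admissible (globally C¹ᐟ²) test functions and the generator
    (Adm : (ℝ → Xs → ℝ) → Prop)
    (A : (ℝ → Xs → ℝ) → ℝ × Xs × Us → ℝ)
    (ν0 : Measure Xs) [IsProbabilityMeasure ν0]
    (ν : Fin (nT + 1) → Fin nX → Measure Xs)
    (hνfin : ∀ i k, IsFiniteMeasure (ν i k))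
    (hν0 : ∀ k, ν 0 k = ν0.restrict (Xp k))
    (ξ : Fin nT → Fin nX → Measure (ℝ × Xs × Us))
    (hξfin : ∀ i k, IsFiniteMeasure (ξ i k))
    (π : Fin nT → Fin nX → Fin nX → SignedMeasure (ℝ × Xs))
    (hπasym : ∀ i j k, π i j k = - π i k j)
    -- local Dynkin constraints for every admissible test function
    (hlocal : ∀ w : ℝ → Xs → ℝ, Adm w → ∀ (i : Fin nT) (k : Fin nX),
        (∫ x, w (τ i.succ) x ∂(ν i.succ k)) - ∫ x, w (τ i.castSucc) x ∂(ν i.castSucc k)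
        = (∫ p, A w p ∂(ξ i k))
          + ∑ j ∈ Finset.univ.filter (· ≠ k), sintegral (π i j k) (fun p => w p.1 p.2))
    -- integrability
    (hint_w : ∀ w : ℝ → Xs → ℝ, Adm w → ∀ (t : ℝ) (i : Fin (nT + 1)) (k : Fin nX),
        Integrable (w t) (ν i k) ∧ Integrable (w t) ν0)
    (hint_A : ∀ w : ℝ → Xs → ℝ, Adm w → ∀ i k, Integrable (A w) (ξ i k))
    (hint_ℓ : ∀ i k, Integrable (fun p : ℝ × Xs × Us => ℓ p.2.1 p.2.2) (ξ i k))
    (hint_φ : ∀ k, Integrable φ (ν (Fin.last nT) k)) :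
    (∀ w : ℝ → Xs → ℝ, Adm w →
        (∫ x, w T x ∂(∑ k : Fin nX, ν (Fin.last nT) k)) - ∫ x, w 0 x ∂ν0
          = ∫ p, A w p ∂(∑ i : Fin nT, ∑ k : Fin nX, ξ i k))
    ∧ ((∑ i : Fin nT, ∑ k : Fin nX, ∫ p, ℓ p.2.1 p.2.2 ∂(ξ i k))
          + ∑ k : Fin nX, ∫ x, φ x ∂(ν (Fin.last nT) k)
        = (∫ p, ℓ p.2.1 p.2.2 ∂(∑ i : Fin nT, ∑ k : Fin nX, ξ i k))
          + ∫ x, φ x ∂(∑ k : Fin nX, ν (Fin.last nT) k)) := by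
  
  have tele : ∀ (f : Fin (nT + 1) → ℝ),
      ∑ i : Fin nT, (f i.succ - f i.castSucc) = f (Fin.last nT) - f 0 := by
    intro f
    set g : ℕ → ℝ := fun n => f ⟨min n nT, Nat.lt_succ_of_le (min_le_right _ _)⟩ with hg
    have h1 : ∀ i : Fin nT, f i.succ - f i.castSucc = g (i.1 + 1) - g i.1 := by
      intro i
      have e1 : i.succ = (⟨min (i.1 + 1) nT, Nat.lt_succ_of_le (min_le_right _ _)⟩ : Fin (nT+1)) := by
        ext; simp [Nat.min_eq_left (Nat.succ_le_of_lt i.isLt)]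
      have e2 : i.castSucc = (⟨min i.1 nT, Nat.lt_succ_of_le (min_le_right _ _)⟩ : Fin (nT+1)) := by
        ext; simp [Nat.min_eq_left (le_of_lt i.isLt)]
      rw [e1, e2]
    calc ∑ i : Fin nT, (f i.succ - f i.castSucc)
        = ∑ i : Fin nT, (g (i.1 + 1) - g i.1) := Finset.sum_congr rfl (fun i _ => h1 i)
      _ = ∑ n ∈ Finset.range nT, (g (n + 1) - g n) :=
          Fin.sum_univ_eq_sum_range (fun n => g (n + 1) - g n) nT
      _ = g nT - g 0 := Finset.sum_range_sub g nT
      _ = f (Fin.last nT) - f 0 := by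
          have h2 : g nT = f (Fin.last nT) := by
            simp only [hg]; congr 1; exact Fin.ext (by simp)
          have h3 : g 0 = f 0 := by
            simp only [hg]; congr 1
          rw [h2, h3]
  have hrestr : (∑ k : Fin nX, ν0.restrict (Xp k)) = ν0 := by
    rw [← Measure.sum_fintype, ← Measure.restrict_iUnion hdisj hXmeas, hcover,
      Measure.restrict_univ]
  constructor
  · intro w hw
    haveI := hνfin; haveI := hξfin
    -- π-cancellation per i
    have hpi : ∀ i : Fin nT,
        ∑ k : Fin nX, ∑ j ∈ Finset.univ.filter (· ≠ k),
          sintegral (π i j k) (fun p => w p.1 p.2) = 0 := by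
      intro i
      set S := ∑ k : Fin nX, ∑ j ∈ Finset.univ.filter (· ≠ k),
          sintegral (π i j k) (fun p => w p.1 p.2) with hS
      have hswap : S = ∑ k : Fin nX, ∑ j ∈ Finset.univ.filter (· ≠ k),
          sintegral (π i k j) (fun p => w p.1 p.2) := by
        rw [hS]
        rw [Finset.sum_comm' (s' := fun j => Finset.univ.filter (· ≠ j)) (t' := Finset.univ)]
        intro x y
        simp [ne_comm]
      have : S = -S := by
        calc S = ∑ k : Fin nX, ∑ j ∈ Finset.univ.filter (· ≠ k),
            sintegral (π i k j) (fun p => w p.1 p.2) := hswap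
          _ = ∑ k : Fin nX, ∑ j ∈ Finset.univ.filter (· ≠ k),
            - sintegral (π i j k) (fun p => w p.1 p.2) := by
              refine Finset.sum_congr rfl fun k _ => Finset.sum_congr rfl fun j _ => ?_
              rw [hπasym i k j, sintegral_neg]
          _ = -S := by rw [hS]; simp
      linarith
    have hsum := fun i k => hlocal w hw i k
    have hL : ∑ i : Fin nT, ∑ k : Fin nX,
        ((∫ x, w (τ i.succ) x ∂(ν i.succ k)) - ∫ x, w (τ i.castSucc) x ∂(ν i.castSucc k))
        = ∑ i : Fin nT, ∑ k : Fin nX, ∫ p, A w p ∂(ξ i k) := by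
      calc ∑ i : Fin nT, ∑ k : Fin nX,
          ((∫ x, w (τ i.succ) x ∂(ν i.succ k)) - ∫ x, w (τ i.castSucc) x ∂(ν i.castSucc k))
          = ∑ i : Fin nT, ∑ k : Fin nX, ((∫ p, A w p ∂(ξ i k))
            + ∑ j ∈ Finset.univ.filter (· ≠ k), sintegral (π i j k) (fun p => w p.1 p.2)) := by
            exact Finset.sum_congr rfl fun i _ => Finset.sum_congr rfl fun k _ => hsum i k
        _ = ∑ i : Fin nT, ((∑ k : Fin nX, ∫ p, A w p ∂(ξ i k))
            + ∑ k : Fin nX, ∑ j ∈ Finset.univ.filter (· ≠ k),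
              sintegral (π i j k) (fun p => w p.1 p.2)) := by
            simp [Finset.sum_add_distrib]
        _ = ∑ i : Fin nT, ∑ k : Fin nX, ∫ p, A w p ∂(ξ i k) := by
            refine Finset.sum_congr rfl fun i _ => ?_
            rw [hpi i, add_zero]
    -- telescope the LHS
    have hLHS : ∑ i : Fin nT, ∑ k : Fin nX,
        ((∫ x, w (τ i.succ) x ∂(ν i.succ k)) - ∫ x, w (τ i.castSucc) x ∂(ν i.castSucc k))
        = (∫ x, w T x ∂(∑ k : Fin nX, ν (Fin.last nT) k)) - ∫ x, w 0 x ∂ν0 := by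
      rw [Finset.sum_comm]
      have : ∀ k : Fin nX, ∑ i : Fin nT,
          ((∫ x, w (τ i.succ) x ∂(ν i.succ k)) - ∫ x, w (τ i.castSucc) x ∂(ν i.castSucc k))
          = (∫ x, w T x ∂(ν (Fin.last nT) k)) - ∫ x, w 0 x ∂(ν 0 k) := by
        intro k
        have := tele (fun i => ∫ x, w (τ i) x ∂(ν i k))
        simpa [hτT, hτ0] using this
      rw [Finset.sum_congr rfl fun k _ => this k, Finset.sum_sub_distrib]
      congr 1
      · rw [integral_finset_sum_measure (fun k _ => (hint_w w hw T (Fin.last nT) k).1)]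
      · calc ∑ k : Fin nX, ∫ x, w 0 x ∂(ν 0 k)
            = ∑ k : Fin nX, ∫ x, w 0 x ∂(ν0.restrict (Xp k)) := by
              refine Finset.sum_congr rfl fun k _ => ?_; rw [hν0 k]
          _ = ∫ x, w 0 x ∂(∑ k : Fin nX, ν0.restrict (Xp k)) := by
              refine (integral_finset_sum_measure fun k _ => ?_).symm
              rw [← hν0 k]; exact (hint_w w hw 0 0 k).1
          _ = ∫ x, w 0 x ∂ν0 := by rw [hrestr]
    have hRHS : ∫ p, A w p ∂(∑ i : Fin nT, ∑ k : Fin nX, ξ i k)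
        = ∑ i : Fin nT, ∑ k : Fin nX, ∫ p, A w p ∂(ξ i k) := by
      rw [integral_finset_sum_measure]
      · exact Finset.sum_congr rfl fun i _ =>
          integral_finset_sum_measure fun k _ => hint_A w hw i k
      · intro i _
        rw [integrable_finset_sum_measure]
        exact fun k _ => hint_A w hw i k
    rw [← hLHS, hL, hRHS]
  · haveI := hνfin; haveI := hξfin
    congr 1
    · rw [integral_finset_sum_measure]
      · exact Finset.sum_congr rfl fun i _ =>
          (integral_finset_sum_measure fun k _ => hint_ℓ i k).symm
      · intro i _
        rw [integrable_finset_sum_measure]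
        exact fun k _ => hint_ℓ i k
    · exact (integral_finset_sum_measure fun k _ => hint_φ k).symm
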